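/- Let b ≥ 2 be an integer and ε ∈ (0,1) with b(1−2ε)² ≤ 1. Then the reconstruction problem for the b-ary tree T_b and the binary symmetric channel with error probability ε is not solvable, i.e. lim_{n→∞} D_V(P_n^{+1}, P_n^{−1}) = 0. -/

import Mathlib

open Filter

/-- The distribution of the configuration at level `n` of the `b`-ary tree,
for the broadcast process with channel `M`, given that the root has value `i`.
Vertices at level `n` are encoded as paths `Fin n → Fin b`. -/
noncomputable def levelDist {A : Type} [Fintype A] [DecidableEq A]
    (M : A → A → ℝ) (b : ℕ) (i : A) : (n : ℕ) → ((Fin n → Fin b) → A) → ℝ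
  | 0 => fun σ => if σ = (fun _ => i) then 1 else 0
  | n + 1 => fun τ => ∑ σ : (Fin n → Fin b) → A, levelDist M b i n σ *
      ∏ w : Fin (n + 1) → Fin b, M (σ fun m => w m.castSucc) (τ w)

/-- Total variation distance between two (densities of) probability measures
on a finite set. -/
noncomputable def tvDist {Ω : Type*} [Fintype Ω] (P Q : Ω → ℝ) : ℝ :=
  (1 / 2) * ∑ σ, |P σ - Q σ|
/-- The binary symmetric channel with error probability `ε`, on the alphabet
`Bool` (where `true` represents `+1` and `false` represents `-1`). -/
noncomputable def bsc (ε : ℝ) : Bool → Bool → ℝ :=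
  fun i j => if i = j then 1 - ε else ε

/-!
Let `B_n = ∑_σ √(P_n^+(σ) P_n^-(σ))` be the Bhattacharyya coefficient of the two level
distributions. Le Cam's inequality `D_V(P_n^+, P_n^-) ≤ √(1 - B_n²)` reduces the claim to
`B_n → 1`. Given the root, the `b` subtrees of its children are independent copies of the
channel image of the level-`n` laws, and the coefficient is multiplicative over independent
coordinates, so `B_{n+1} = β_n^b` with `β_n` the coefficient of the two channel images. By
concavity of `√`, `β_n ≥ 1 - θ² h_n` where `θ = 1 - 2ε` and `h_n = 1 - B_n`, hence
`h_{n+1} ≤ 1 - (1 - θ² h_n)^b ≤ b θ² h_n - (θ² h_n)² / 2 ≤ h_n - (θ² h_n)² / 2`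
as `b θ² ≤ 1`. So `h_n` decreases, and its limit `L` satisfies `θ² L = 0` and then `L ≤ 0`.
-/

open Topology

noncomputable def bhattacharyya {Ω : Type*} [Fintype Ω] (P Q : Ω → ℝ) : ℝ :=
  ∑ σ, √(P σ * Q σ)

section bhattacharyya

variable {Ω : Type*} [Fintype Ω] {P Q : Ω → ℝ}

lemma bhattacharyya_nonneg : 0 ≤ bhattacharyya P Q :=
  Finset.sum_nonneg fun _ _ => Real.sqrt_nonneg _

lemma bhattacharyya_le_one (hP : ∀ σ, 0 ≤ P σ) (hQ : ∀ σ, 0 ≤ Q σ)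
    (hP1 : ∑ σ, P σ = 1) (hQ1 : ∑ σ, Q σ = 1) : bhattacharyya P Q ≤ 1 := by
  have hsq : bhattacharyya P Q ^ 2 ≤ (∑ σ, P σ) * ∑ σ, Q σ :=
    Finset.sum_sq_le_sum_mul_sum_of_sq_le_mul _ (fun σ _ => hP σ) (fun σ _ => hQ σ)
      fun σ _ => (Real.sq_sqrt (mul_nonneg (hP σ) (hQ σ))).le
  rw [hP1, hQ1, one_mul] at hsq
  exact (pow_le_one_iff_of_nonneg bhattacharyya_nonneg two_ne_zero).1 hsq

lemma bhattacharyya_comp_equiv {Ω' : Type*} [Fintype Ω'] (e : Ω' ≃ Ω) :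
    bhattacharyya (P ∘ e) (Q ∘ e) = bhattacharyya P Q :=
  e.sum_comp fun σ => √(P σ * Q σ)

lemma bhattacharyya_pi {ι X : Type*} [Fintype ι] [DecidableEq ι] [Fintype X]
    {p q : ι → X → ℝ} (hp : ∀ c x, 0 ≤ p c x) (hq : ∀ c x, 0 ≤ q c x) :
    bhattacharyya (fun g : ι → X => ∏ c, p c (g c)) (fun g => ∏ c, q c (g c))
      = ∏ c, bhattacharyya (p c) (q c) := by
  simp only [bhattacharyya, ← Finset.prod_mul_distrib,
    Real.sqrt_prod _ fun c _ => mul_nonneg (hp c _) (hq c _)]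
  exact (Fintype.prod_sum fun c x => √(p c x * q c x)).symm

/-- Le Cam's inequality. -/
lemma tvDist_le_sqrt_one_sub_bhattacharyya_sq (hP : ∀ σ, 0 ≤ P σ) (hQ : ∀ σ, 0 ≤ Q σ)
    (hP1 : ∑ σ, P σ = 1) (hQ1 : ∑ σ, Q σ = 1) :
    tvDist P Q ≤ √(1 - bhattacharyya P Q ^ 2) := by
  have hsqrt (σ : Ω) : √(P σ * Q σ) = √(P σ) * √(Q σ) := Real.sqrt_mul (hP σ) _
  have hadd : ∑ σ, (√(P σ) + √(Q σ)) ^ 2 = 2 + 2 * bhattacharyya P Q := by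
    simp only [add_sq, Real.sq_sqrt (hP _), Real.sq_sqrt (hQ _), Finset.sum_add_distrib,
      mul_assoc, ← Finset.mul_sum, hP1, hQ1, bhattacharyya, hsqrt]
    ring
  have hsub : ∑ σ, (√(P σ) - √(Q σ)) ^ 2 = 2 - 2 * bhattacharyya P Q := by
    simp only [sub_sq, Real.sq_sqrt (hP _), Real.sq_sqrt (hQ _), Finset.sum_add_distrib,
      Finset.sum_sub_distrib, mul_assoc, ← Finset.mul_sum, hP1, hQ1, bhattacharyya, hsqrt]
    ring
  have habs (σ : Ω) : |P σ - Q σ| = |√(P σ) - √(Q σ)| * (√(P σ) + √(Q σ)) := by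
    rw [← abs_of_nonneg (by positivity : 0 ≤ √(P σ) + √(Q σ)), ← abs_mul, mul_comm,
      ← sq_sub_sq, Real.sq_sqrt (hP σ), Real.sq_sqrt (hQ σ)]
  have hCS := Finset.sum_mul_sq_le_sq_mul_sq Finset.univ
    (fun σ => |√(P σ) - √(Q σ)|) (fun σ => √(P σ) + √(Q σ))
  simp only [← habs, sq_abs, hadd, hsub] at hCS
  refine (le_abs_self _).trans (Real.abs_le_sqrt ?_)
  unfold tvDist
  nlinarith

lemma tvDist_nonneg : 0 ≤ tvDist P Q := by
  unfold tvDist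
  positivity

end bhattacharyya

/-- A configuration at level `n + 1` is the `b`-tuple of the level-`n` configurations of the
subtrees rooted at the children of the root. -/
def subtreeEquiv (b n : ℕ) (A : Type) :
    (Fin b → (Fin n → Fin b) → A) ≃ ((Fin (n + 1) → Fin b) → A) where
  toFun g w := g (w 0) (Fin.tail w)
  invFun τ c v := τ (Fin.cons c v)
  left_inv g := by simp
  right_inv τ := by simp

@[simp]
lemma subtreeEquiv_apply {b n : ℕ} {A : Type} (g : Fin b → (Fin n → Fin b) → A)
    (w : Fin (n + 1) → Fin b) : subtreeEquiv b n A g w = g (w 0) (Fin.tail w) :=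
  rfl

section levelDist

variable {A : Type} (M : A → A → ℝ) (b : ℕ)

noncomputable def levelKernel (n : ℕ) (σ : (Fin n → Fin b) → A)
    (τ : (Fin (n + 1) → Fin b) → A) : ℝ :=
  ∏ w : Fin (n + 1) → Fin b, M (σ fun m => w m.castSucc) (τ w)

variable {M b}

lemma levelKernel_subtreeEquiv (n : ℕ) (g : Fin b → (Fin n → Fin b) → A)
    (G : Fin b → (Fin (n + 1) → Fin b) → A) :
    levelKernel M b (n + 1) (subtreeEquiv b n A g) (subtreeEquiv b (n + 1) A G)
      = ∏ c, levelKernel M b n (g c) (G c) := by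
  rw [levelKernel, ← (Fin.consEquiv fun _ => Fin b).prod_comp, Fintype.prod_prod_type]
  refine Finset.prod_congr rfl fun c _ => Finset.prod_congr rfl fun w _ => ?_
  have hcast : (fun m : Fin (n + 1) => (Fin.cons c w : Fin (n + 2) → Fin b) m.castSucc)
      = Fin.cons c fun m => w m.castSucc := by
    funext m
    cases m using Fin.cases <;> simp
  simp [hcast, Fin.consEquiv]

lemma sum_levelKernel [Fintype A] (hM : ∀ i, ∑ j, M i j = 1) (n : ℕ)
    (σ : (Fin n → Fin b) → A) :
    ∑ τ, levelKernel M b n σ τ = 1 := by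
  simp only [levelKernel, ← Fintype.prod_sum, hM, Finset.prod_const_one]

variable [Fintype A] [DecidableEq A]

variable (M b) in
lemma levelDist_succ (i : A) (n : ℕ) (τ : (Fin (n + 1) → Fin b) → A) :
    levelDist M b i (n + 1) τ = ∑ σ, levelDist M b i n σ * levelKernel M b n σ τ :=
  rfl

lemma levelDist_nonneg (hM : ∀ i j, 0 ≤ M i j) (i : A) (n : ℕ)
    (σ : (Fin n → Fin b) → A) :
    0 ≤ levelDist M b i n σ := by
  induction n with
  | zero => unfold levelDist; positivity
  | succ n ih =>
    exact Finset.sum_nonneg fun σ _ => mul_nonneg (ih σ) (Finset.prod_nonneg fun _ _ => hM _ _)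

lemma sum_levelDist (hM : ∀ i, ∑ j, M i j = 1) (i : A) (n : ℕ) :
    ∑ σ, levelDist M b i n σ = 1 := by
  induction n with
  | zero => simp [levelDist]
  | succ n ih =>
    simp only [levelDist_succ, Finset.sum_comm (γ := (Fin (n + 1) → Fin b) → A),
      ← Finset.mul_sum, sum_levelKernel hM, mul_one, ih]

lemma sum_mul_levelDist_zero (i : A) (σ : (Fin 0 → Fin b) → A) :
    ∑ j, M i j * levelDist M b j 0 σ = M i (σ Fin.elim0) := by
  have hσ (j : A) : σ = (fun _ => j) ↔ σ Fin.elim0 = j :=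
    ⟨fun h => h ▸ rfl, fun h => funext fun v => Subsingleton.elim v Fin.elim0 ▸ h⟩
  simp [levelDist, hσ]

lemma levelDist_subtreeEquiv (i : A) (n : ℕ) (g : Fin b → (Fin n → Fin b) → A) :
    levelDist M b i (n + 1) (subtreeEquiv b n A g)
      = ∏ c, ∑ j, M i j * levelDist M b j n (g c) := by
  induction n with
  | zero =>
    rw [levelDist_succ, Fintype.sum_eq_single (fun _ => i) fun σ hσ => by simp [levelDist, hσ]]
    simp only [sum_mul_levelDist_zero]
    simp only [levelDist, ↓reduceIte, one_mul, levelKernel, subtreeEquiv_apply]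
    refine Fintype.prod_equiv (Equiv.funUnique (Fin 1) (Fin b)) _ _ fun w => ?_
    simp [Subsingleton.elim (Fin.tail w) Fin.elim0]
  | succ n ih =>
    rw [levelDist_succ, ← (subtreeEquiv b n A).sum_comp]
    simp only [ih, levelKernel_subtreeEquiv, ← Finset.prod_mul_distrib]
    rw [← Fintype.prod_sum fun c σ =>
      (∑ j, M i j * levelDist M b j n σ) * levelKernel M b n σ (g c)]
    refine Finset.prod_congr rfl fun c _ => ?_
    simp only [levelDist_succ, Finset.mul_sum, Finset.sum_mul, mul_assoc]
    exact Finset.sum_comm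

lemma bhattacharyya_levelDist_succ (hM : ∀ i j, 0 ≤ M i j) (i i' : A) (n : ℕ) :
    bhattacharyya (levelDist M b i (n + 1)) (levelDist M b i' (n + 1))
      = bhattacharyya (fun σ => ∑ j, M i j * levelDist M b j n σ)
          (fun σ => ∑ j, M i' j * levelDist M b j n σ) ^ b := by
  have hmix (k : A) (σ : (Fin n → Fin b) → A) : 0 ≤ ∑ j, M k j * levelDist M b j n σ :=
    Finset.sum_nonneg fun j _ => mul_nonneg (hM k j) (levelDist_nonneg hM j n σ)
  rw [← bhattacharyya_comp_equiv (subtreeEquiv b n A)]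
  simp only [Function.comp_def, levelDist_subtreeEquiv]
  rw [bhattacharyya_pi (fun _ => hmix i) (fun _ => hmix i'), Finset.prod_const, Finset.card_univ,
    Fintype.card_fin]

end levelDist

section bsc

variable {ε : ℝ}

lemma bsc_nonneg (hε0 : 0 ≤ ε) (hε1 : ε ≤ 1) (i j : Bool) : 0 ≤ bsc ε i j := by
  unfold bsc
  split_ifs <;> linarith

lemma sum_bsc (i : Bool) : ∑ j, bsc ε i j = 1 := by
  cases i <;> simp [bsc]

lemma sum_bsc_true_mul (f : Bool → ℝ) :
    ∑ j, bsc ε true j * f j = (1 - ε) * f true + ε * f false := by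
  simp [bsc]

lemma sum_bsc_false_mul (f : Bool → ℝ) :
    ∑ j, bsc ε false j * f j = ε * f true + (1 - ε) * f false := by
  simp [bsc]

/-- The product of the two mixtures is `(1 - θ²) ((P + Q) / 2)² + θ² P Q` with `θ = 1 - 2ε`,
and `√` is concave. -/
lemma one_sub_mul_le_bhattacharyya_bsc {Ω : Type*} [Fintype Ω] {P Q : Ω → ℝ}
    (hε0 : 0 ≤ ε) (hε1 : ε ≤ 1) (hP : ∀ σ, 0 ≤ P σ) (hQ : ∀ σ, 0 ≤ Q σ)
    (hP1 : ∑ σ, P σ = 1) (hQ1 : ∑ σ, Q σ = 1) :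
    1 - (1 - 2 * ε) ^ 2 * (1 - bhattacharyya P Q)
      ≤ bhattacharyya (fun σ => (1 - ε) * P σ + ε * Q σ)
          (fun σ => ε * P σ + (1 - ε) * Q σ) := by
  set t := (1 - 2 * ε) ^ 2
  have ht0 : 0 ≤ t := sq_nonneg _
  have ht1 : 0 ≤ 1 - t := by nlinarith
  have hpoint (σ : Ω) : (1 - t) * ((P σ + Q σ) / 2) + t * √(P σ * Q σ)
      ≤ √(((1 - ε) * P σ + ε * Q σ) * (ε * P σ + (1 - ε) * Q σ)) := by
    have hmix : ((1 - ε) * P σ + ε * Q σ) * (ε * P σ + (1 - ε) * Q σ)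
        = (1 - t) * ((P σ + Q σ) / 2) ^ 2 + t * (P σ * Q σ) := by ring
    have hPQ : 0 ≤ (P σ + Q σ) / 2 := by linarith [hP σ, hQ σ]
    have hconc := Real.strictConcaveOn_sqrt.concaveOn.2
      (Set.mem_Ici.2 (sq_nonneg ((P σ + Q σ) / 2))) (Set.mem_Ici.2 (mul_nonneg (hP σ) (hQ σ)))
      ht1 ht0 (by ring)
    rw [hmix]
    simpa only [smul_eq_mul, Real.sqrt_sq hPQ] using hconc
  calc 1 - t * (1 - bhattacharyya P Q)
      = ∑ σ, ((1 - t) * ((P σ + Q σ) / 2) + t * √(P σ * Q σ)) := by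
        simp only [Finset.sum_add_distrib, ← Finset.mul_sum, ← Finset.sum_div, hP1, hQ1,
          bhattacharyya]
        ring
    _ ≤ _ := Finset.sum_le_sum fun σ _ => hpoint σ

lemma one_sub_pow_le_bhattacharyya_bsc_levelDist_succ {b : ℕ} (hε0 : 0 ≤ ε) (hε1 : ε ≤ 1)
    (n : ℕ) :
    (1 - (1 - 2 * ε) ^ 2 *
        (1 - bhattacharyya (levelDist (bsc ε) b true n) (levelDist (bsc ε) b false n))) ^ b
      ≤ bhattacharyya (levelDist (bsc ε) b true (n + 1))
          (levelDist (bsc ε) b false (n + 1)) := by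
  have hM := bsc_nonneg hε0 hε1
  have hP := levelDist_nonneg (b := b) hM true n
  have hQ := levelDist_nonneg (b := b) hM false n
  have hB := bhattacharyya_nonneg (P := levelDist (bsc ε) b true n)
    (Q := levelDist (bsc ε) b false n)
  rw [bhattacharyya_levelDist_succ hM]
  simp only [sum_bsc_true_mul, sum_bsc_false_mul]
  refine pow_le_pow_left₀ ?_ (one_sub_mul_le_bhattacharyya_bsc hε0 hε1 hP hQ
    (sum_levelDist sum_bsc _ n) (sum_levelDist sum_bsc _ n)) b
  nlinarith

end bsc

lemma one_sub_one_sub_pow_le {x : ℝ} (hx0 : 0 ≤ x) (hx1 : x ≤ 1) {b : ℕ} (hb : 2 ≤ b) :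
    1 - (1 - x) ^ b ≤ b * x - x ^ 2 / 2 := by
  induction b, hb using Nat.le_induction with
  | base => push_cast; nlinarith
  | succ b _ ih =>
    have hpow : (1 - x) ^ b ≤ 1 := pow_le_one₀ (by linarith) (by linarith)
    push_cast
    calc 1 - (1 - x) ^ (b + 1) = (1 - (1 - x) ^ b) + x * (1 - x) ^ b := by ring
      _ ≤ (b * x - x ^ 2 / 2) + x * 1 := by gcongr
      _ = (b + 1) * x - x ^ 2 / 2 := by ring

lemma tendsto_zero_of_succ_le_mul_sub_sq {u : ℕ → ℝ} {a t : ℝ} (hu0 : ∀ n, 0 ≤ u n)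
    (hat : a * t ≤ 1)
    (hu : ∀ n, u (n + 1) ≤ a * (t * u n) - (t * u n) ^ 2 / 2) :
    Tendsto u atTop (𝓝 0) := by
  have hanti : Antitone u := antitone_nat_of_succ_le fun n => by
    nlinarith [hu n, mul_le_mul_of_nonneg_right hat (hu0 n), sq_nonneg (t * u n)]
  have hL := tendsto_atTop_ciInf hanti ⟨0, Set.forall_mem_range.2 hu0⟩
  set L := ⨅ n, u n
  have hL0 : 0 ≤ L := ge_of_tendsto' hL hu0
  have hfix : L ≤ a * (t * L) - (t * L) ^ 2 / 2 :=
    le_of_tendsto_of_tendsto' (hL.comp (tendsto_add_atTop_nat 1))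
      (((hL.const_mul t).const_mul a).sub (((hL.const_mul t).pow 2).div_const 2)) hu
  have htL : t * L = 0 := by
    nlinarith [mul_le_mul_of_nonneg_right hat hL0, sq_nonneg (t * L)]
  rw [htL] at hfix
  rwa [show L = 0 by linarith] at hL

/-- If `b (1-2ε)² ≤ 1` then the reconstruction problem for the `b`-ary tree and
the binary symmetric channel with error probability `ε` is not solvable:
`D_V(P_n^{+1}, P_n^{-1}) → 0`. -/
theorem bsc_reconstruction_not_solvable (b : ℕ) (hb : 2 ≤ b) (ε : ℝ)
    (hε0 : 0 < ε) (hε1 : ε < 1) (h : (b : ℝ) * (1 - 2 * ε) ^ 2 ≤ 1) :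
    Tendsto
      (fun n => tvDist (levelDist (bsc ε) b true n) (levelDist (bsc ε) b false n))
      atTop (nhds 0) := by
  set B : ℕ → ℝ := fun n =>
    bhattacharyya (levelDist (bsc ε) b true n) (levelDist (bsc ε) b false n)
  have hM := bsc_nonneg hε0.le hε1.le
  have hP (i : Bool) (n : ℕ) := levelDist_nonneg (b := b) hM i n
  have hP1 (i : Bool) (n : ℕ) := sum_levelDist (b := b) (sum_bsc (ε := ε)) i n
  have hB0 (n : ℕ) : 0 ≤ B n := bhattacharyya_nonneg
  have hB1 (n : ℕ) : B n ≤ 1 :=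
    bhattacharyya_le_one (hP true n) (hP false n) (hP1 true n) (hP1 false n)
  have hdecay : Tendsto (fun n => 1 - B n) atTop (𝓝 0) := by
    refine tendsto_zero_of_succ_le_mul_sub_sq (fun n => sub_nonneg.2 (hB1 n)) h fun n => ?_
    have hx0 : 0 ≤ (1 - 2 * ε) ^ 2 * (1 - B n) := mul_nonneg (sq_nonneg _) (sub_nonneg.2 (hB1 n))
    have hx1 : (1 - 2 * ε) ^ 2 * (1 - B n) ≤ 1 := by nlinarith [hB0 n]
    linarith [one_sub_pow_le_bhattacharyya_bsc_levelDist_succ (b := b) hε0.le hε1.le n,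
      one_sub_one_sub_pow_le hx0 hx1 hb]
  have hB : Tendsto B atTop (𝓝 1) := by simpa using hdecay.const_sub 1
  refine squeeze_zero (fun n => tvDist_nonneg) (fun n =>
    tvDist_le_sqrt_one_sub_bhattacharyya_sq (hP true n) (hP false n) (hP1 true n) (hP1 false n)) ?_
  simpa using ((hB.pow 2).const_sub 1).sqrt
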